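/- arXiv:1403.2322 — 5 statements merged into one kernel-verified Lean document; each statement's English description precedes it below -/
import Mathlib

section
/- Let Γ be a finite vertex-transitive graph (possibly disconnected) on vertex set V, let 2 ≤ n ≤ |V| − 1, and let G be a group acting on Γ by graph automorphisms whose action on V is transitive. Assume h_{n+1}(Γ) > 2(n+1)·h_n(Γ), and let V = A_1 ⊔ ⋯ ⊔ A_n be a partition into n non-empty sets achieving h_n(Γ). Then there exist an integer l with 1 ≤ l ≤ n, a permutation τ of {1,…,n}, and a group homomorphism Φ_n : G → S_l (the symmetric group on {1,…,l}) such that for every g ∈ G and every i ∈ {1,…,l}, |g·A_{τ(i)} △ A_{τ(Φ_n(g)(i))}| ≤ (4·h_n(Γ)/h_{n+1}(Γ))·max_{1≤k≤n} |A_k|. -/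
open scoped Pointwise

namespace Multiway

variable {V : Type*}

/-- The edge boundary `∂A`: the set of edges with one endpoint in `A` and the other in `Vᶜ∖A`. -/
def edgeBdry (G : SimpleGraph V) (A : Set V) : Set (Sym2 V) :=
  {e | e ∈ G.edgeSet ∧ ∃ u v, e = s(u, v) ∧ u ∈ A ∧ v ∉ A}

/-- The symmetric vertex boundary `δA`: vertices incident to an edge crossing `A`. -/
def vertBdry (G : SimpleGraph V) (A : Set V) : Set V :=
  {x | ∃ y, G.Adj x y ∧ ¬ (x ∈ A ↔ y ∈ A)}

/-- A partition of the vertex set into `n` non-empty pairwise disjoint sets. -/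
def IsNPartition (n : ℕ) (A : Fin n → Set V) : Prop :=
  (∀ i, (A i).Nonempty) ∧ (∀ i j, i ≠ j → Disjoint (A i) (A j)) ∧ (⋃ i, A i) = Set.univ

/-- `max_i |∂A_i| / |A_i|`. -/
noncomputable def edgeRatioMax (G : SimpleGraph V) {n : ℕ} (A : Fin n → Set V) : ℝ :=
  ⨆ i, ((edgeBdry G (A i)).ncard : ℝ) / ((A i).ncard : ℝ)

/-- `max_i |δA_i| / |A_i|`. -/
noncomputable def vertRatioMax (G : SimpleGraph V) {n : ℕ} (A : Fin n → Set V) : ℝ :=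
  ⨆ i, ((vertBdry G (A i)).ncard : ℝ) / ((A i).ncard : ℝ)

/-- The `n`-way isoperimetric constant `h_n(Γ)`. -/
noncomputable def multiH (G : SimpleGraph V) (n : ℕ) : ℝ :=
  sInf {r | ∃ A : Fin n → Set V, IsNPartition n A ∧ r = edgeRatioMax G A}

/-- The `n`-way symmetric vertex isoperimetric constant `ι_n(Γ)`. -/
noncomputable def multiIota (G : SimpleGraph V) (n : ℕ) : ℝ :=
  sInf {r | ∃ A : Fin n → Set V, IsNPartition n A ∧ r = vertRatioMax G A}

/-- A graph is vertex-transitive if its automorphism group acts transitively on vertices. -/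
def VertexTransitive (G : SimpleGraph V) : Prop :=
  ∀ u v : V, ∃ φ : G ≃g G, φ u = v

/-!
Let `r = 2 max_k |∂A_k| / h_{n+1}`. Splitting a block `A_j` along a set `X` with
`|∂X| ≤ max_k |∂A_k|` into two pieces of more than `r` points would give an `(n+1)`-partition
with all ratios below `h_{n+1}`. Translates `g • A_i` are such sets, so `g • A_i` meets each `A_j`
in at most `r` points or misses at most `r` points of it; if `|A_i| > n r` there is exactly one
block of the second kind. The gap `h_{n+1} > 2(n+1) h_n` makes `(n+1) r` smaller than the largest
block, and the blocks reached in this way from a largest block are then large enough for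
`g ↦ (A_i ↦ that block)` to be an action of `G`.
-/

section EdgeBoundary

variable (Γ : SimpleGraph V)

lemma edgeBdry_compl (S : Set V) : edgeBdry Γ Sᶜ = edgeBdry Γ S := by
  have key : ∀ T : Set V, edgeBdry Γ Tᶜ ⊆ edgeBdry Γ T := by
    rintro T e ⟨he, u, v, rfl, hu, hv⟩
    exact ⟨he, v, u, Sym2.eq_swap, Set.notMem_compl_iff.mp hv, hu⟩
  exact (key S).antisymm (by simpa using key Sᶜ)

lemma edgeBdry_inter_subset (X Y : Set V) :
    edgeBdry Γ (X ∩ Y) ⊆ edgeBdry Γ X ∪ edgeBdry Γ Y := by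
  rintro e ⟨he, u, v, rfl, hu, hv⟩
  by_cases hvX : v ∈ X
  · exact Or.inr ⟨he, u, v, rfl, hu.2, fun hvY => hv ⟨hvX, hvY⟩⟩
  · exact Or.inl ⟨he, u, v, rfl, hu.1, hvX⟩

lemma ncard_edgeBdry_inter_le [Finite V] (X Y : Set V) :
    (edgeBdry Γ (X ∩ Y)).ncard ≤ (edgeBdry Γ X).ncard + (edgeBdry Γ Y).ncard :=
  (Set.ncard_le_ncard (edgeBdry_inter_subset Γ X Y)).trans (Set.ncard_union_le _ _)

lemma ncard_edgeBdry_diff_le [Finite V] (X Y : Set V) :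
    (edgeBdry Γ (X \ Y)).ncard ≤ (edgeBdry Γ X).ncard + (edgeBdry Γ Y).ncard := by
  have h := ncard_edgeBdry_inter_le Γ X Yᶜ
  rwa [edgeBdry_compl, ← Set.sdiff_eq] at h

lemma edgeBdry_smul {G : Type*} [Group G] [MulAction G V]
    (hact : ∀ (g : G) (u v : V), Γ.Adj (g • u) (g • v) ↔ Γ.Adj u v) (g : G) (S : Set V) :
    edgeBdry Γ (g • S) = Sym2.map (g • ·) '' edgeBdry Γ S := by
  ext e
  constructor
  · rintro ⟨he, u, v, rfl, hu, hv⟩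
    refine ⟨s(g⁻¹ • u, g⁻¹ • v), ⟨(hact g⁻¹ u v).mpr he, g⁻¹ • u, g⁻¹ • v, rfl,
      Set.mem_smul_set_iff_inv_smul_mem.mp hu,
      fun hmem => hv (Set.mem_smul_set_iff_inv_smul_mem.mpr hmem)⟩, ?_⟩
    simp
  · rintro ⟨e', ⟨he, u, v, rfl, hu, hv⟩, rfl⟩
    exact ⟨(hact g u v).mpr he, g • u, g • v, rfl, Set.smul_mem_smul_set hu,
      fun hmem => hv (Set.smul_mem_smul_set_iff.mp hmem)⟩

lemma ncard_edgeBdry_smul {G : Type*} [Group G] [MulAction G V]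
    (hact : ∀ (g : G) (u v : V), Γ.Adj (g • u) (g • v) ↔ Γ.Adj u v) (g : G) (S : Set V) :
    (edgeBdry Γ (g • S)).ncard = (edgeBdry Γ S).ncard := by
  rw [edgeBdry_smul Γ hact g S]
  exact Set.ncard_image_of_injective _ (Sym2.map.injective (MulAction.injective g))

end EdgeBoundary

section Partition

variable {n : ℕ} {A : Fin n → Set V}

lemma IsNPartition.ncard_pos [Finite V] (hA : IsNPartition n A) (k : Fin n) :
    (0 : ℝ) < (A k).ncard := by
  exact_mod_cast (Set.ncard_pos (Set.toFinite _)).mpr (hA.1 k)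

lemma IsNPartition.ncard_edgeBdry_eq_of_two (Γ : SimpleGraph V) {A : Fin 2 → Set V}
    (hA : IsNPartition 2 A) (i j : Fin 2) :
    (edgeBdry Γ (A i)).ncard = (edgeBdry Γ (A j)).ncard := by
  have hcompl : (A 0)ᶜ = A 1 := by
    refine IsCompl.compl_eq ⟨hA.2.1 0 1 (by decide), codisjoint_iff.mpr ?_⟩
    change A 0 ∪ A 1 = Set.univ
    rw [← hA.2.2]
    ext
    simp [Fin.exists_fin_two]
  have h01 : edgeBdry Γ (A 0) = edgeBdry Γ (A 1) := by rw [← hcompl, edgeBdry_compl]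
  fin_cases i <;> fin_cases j <;> simp [h01]

lemma IsNPartition.split (hA : IsNPartition n A) (j : Fin n) {X : Set V}
    (hin : (A j ∩ X).Nonempty) (hout : (A j \ X).Nonempty) :
    IsNPartition (n + 1) (Fin.snoc (Function.update A j (A j \ X)) (A j ∩ X)) := by
  obtain ⟨hne, hdisj, hcover⟩ := hA
  set B := Function.update A j (A j \ X)
  have hBA : ∀ k, B k ⊆ A k := by
    intro k
    rcases eq_or_ne k j with rfl | hk
    · simp [B]
    · simp [B, hk]
  have hBlast : ∀ k, Disjoint (B k) (A j ∩ X) := by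
    intro k
    rcases eq_or_ne k j with rfl | hk
    · simpa [B] using Set.disjoint_sdiff_inter
    · exact (hdisj k j hk).mono (hBA k) Set.inter_subset_left
  refine ⟨fun k => ?_, fun k k' hkk' => ?_, ?_⟩
  · induction k using Fin.lastCases with
    | last => simpa using hin
    | cast k =>
      rcases eq_or_ne k j with rfl | hk
      · simpa [B] using hout
      · simpa [B, hk] using hne k
  · induction k using Fin.lastCases with
    | last =>
      induction k' using Fin.lastCases with
      | last => exact absurd rfl hkk'
      | cast k' => simpa using (hBlast k').symm
    | cast k =>
      induction k' using Fin.lastCases with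
      | last => simpa using hBlast k
      | cast k' =>
        have hne' : k ≠ k' := fun h => hkk' (congrArg _ h)
        simpa using (hdisj k k' hne').mono (hBA k) (hBA k')
  · refine Set.eq_univ_of_forall fun v => ?_
    obtain ⟨k, hk⟩ := Set.mem_iUnion.mp (hcover.symm ▸ Set.mem_univ v)
    rcases eq_or_ne k j with rfl | hkj
    · by_cases hvX : v ∈ X
      · exact Set.mem_iUnion.mpr ⟨Fin.last n, by simpa using ⟨hk, hvX⟩⟩
      · exact Set.mem_iUnion.mpr ⟨Fin.castSucc k, by simpa [B] using ⟨hk, hvX⟩⟩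
    · exact Set.mem_iUnion.mpr ⟨Fin.castSucc k, by simpa [B, hkj] using hk⟩

end Partition

section Isoperimetric

variable (Γ : SimpleGraph V) {n : ℕ}

lemma div_le_edgeRatioMax (A : Fin n → Set V) (k : Fin n) :
    ((edgeBdry Γ (A k)).ncard : ℝ) / (A k).ncard ≤ edgeRatioMax Γ A :=
  le_ciSup (f := fun k => ((edgeBdry Γ (A k)).ncard : ℝ) / (A k).ncard)
    (Finite.bddAbove_range _) k

lemma edgeRatioMax_nonneg (A : Fin n → Set V) : 0 ≤ edgeRatioMax Γ A :=
  Real.iSup_nonneg fun _ => by positivity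

lemma multiH_le_edgeRatioMax {A : Fin n → Set V} (hA : IsNPartition n A) :
    multiH Γ n ≤ edgeRatioMax Γ A :=
  csInf_le ⟨0, by rintro _ ⟨B, -, rfl⟩; exact edgeRatioMax_nonneg Γ B⟩ ⟨A, hA, rfl⟩

lemma edgeRatioMax_lt {A : Fin (n + 1) → Set V} {c : ℝ}
    (h : ∀ k, ((edgeBdry Γ (A k)).ncard : ℝ) / (A k).ncard < c) : edgeRatioMax Γ A < c := by
  obtain ⟨k, hk⟩ := Finite.exists_max fun k => ((edgeBdry Γ (A k)).ncard : ℝ) / (A k).ncard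
  exact (ciSup_le hk).trans_lt (h k)

/-- Otherwise splitting `A j` along `X` gives an `(n+1)`-partition all of whose ratios are
below `h_{n+1}`. -/
theorem ncard_inter_le_or_ncard_diff_le [Finite V] {A : Fin n → Set V} (hA : IsNPartition n A)
    (hlt : ∀ k, ((edgeBdry Γ (A k)).ncard : ℝ) / (A k).ncard < multiH Γ (n + 1)) {D : ℝ}
    (hD : ∀ k, ((edgeBdry Γ (A k)).ncard : ℝ) ≤ D) {X : Set V}
    (hX : ((edgeBdry Γ X).ncard : ℝ) ≤ D) (j : Fin n) :
    ((A j ∩ X).ncard : ℝ) ≤ 2 * D / multiH Γ (n + 1) ∨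
      ((A j \ X).ncard : ℝ) ≤ 2 * D / multiH Γ (n + 1) := by
  set H := multiH Γ (n + 1)
  have hH : 0 < H := (div_nonneg (Nat.cast_nonneg _) (Nat.cast_nonneg _)).trans_lt (hlt j)
  have hr : 0 ≤ 2 * D / H := div_nonneg (by linarith [(Nat.cast_nonneg _).trans hX]) hH.le
  by_contra! ⟨hin, hout⟩
  have hnonempty : ∀ Y : Set V, 2 * D / H < Y.ncard → Y.Nonempty := fun Y hY =>
    Set.nonempty_of_ncard_ne_zero (by exact_mod_cast (hr.trans_lt hY).ne')
  have hpiece : ∀ Y : Set V,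
      (edgeBdry Γ Y).ncard ≤ (edgeBdry Γ (A j)).ncard + (edgeBdry Γ X).ncard →
      2 * D / H < Y.ncard → ((edgeBdry Γ Y).ncard : ℝ) / Y.ncard < H := fun Y hbdry hY => by
    have hbdry' : ((edgeBdry Γ Y).ncard : ℝ) ≤ (edgeBdry Γ (A j)).ncard + (edgeBdry Γ X).ncard := by
      exact_mod_cast hbdry
    rw [div_lt_iff₀ (hr.trans_lt hY)]
    rw [div_lt_iff₀ hH] at hY
    linarith [hD j]
  have hsplit := hA.split j (hnonempty _ hin) (hnonempty _ hout)
  refine (multiH_le_edgeRatioMax Γ hsplit).not_gt (edgeRatioMax_lt Γ fun k => ?_)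
  induction k using Fin.lastCases with
  | last => simpa using hpiece _ (ncard_edgeBdry_inter_le Γ (A j) X) hin
  | cast k =>
    rcases eq_or_ne k j with rfl | hk
    · simpa using hpiece _ (ncard_edgeBdry_diff_le Γ (A k) X) hout
    · simpa [hk] using hlt k

end Isoperimetric

section Matching

variable {G : Type*} [Group G] [MulAction G V] {n : ℕ}

def Matches (A : Fin n → Set V) (r : ℝ) (g : G) (i j : Fin n) : Prop :=
  r < ((A j ∩ g • A i).ncard : ℝ)

def NoBalancedSplit (G : Type*) [Group G] [MulAction G V] (A : Fin n → Set V) (r : ℝ) : Prop :=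
  ∀ (g : G) (i j : Fin n), ((A j ∩ g • A i).ncard : ℝ) ≤ r ∨ ((A j \ g • A i).ncard : ℝ) ≤ r

variable {A : Fin n → Set V} {r : ℝ} {g g' : G} {i j j' m : Fin n}

lemma matches_one (hi : r < (A i).ncard) : Matches A r (1 : G) i i := by
  simpa [Matches] using hi

lemma exists_matches [Finite V] (hA : IsNPartition n A) (g : G) (hi : n * r < (A i).ncard) :
    ∃ j, Matches A r g i j := by
  by_contra! hsmall
  have hcover : g • A i = ⋃ j, A j ∩ g • A i := by rw [← Set.iUnion_inter, hA.2.2, Set.univ_inter]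
  have : ((A i).ncard : ℝ) ≤ n * r := calc
    ((A i).ncard : ℝ) = (⋃ j, A j ∩ g • A i).ncard := by rw [← hcover, Set.ncard_smul_set]
    _ ≤ ∑ j, ((A j ∩ g • A i).ncard : ℝ) := by exact_mod_cast Set.ncard_iUnion_le_of_fintype _
    _ ≤ ∑ _j : Fin n, r := Finset.sum_le_sum fun j _ => not_lt.mp (hsmall j)
    _ = n * r := by simp
  linarith

namespace NoBalancedSplit

lemma nonneg (h : NoBalancedSplit G A r) (i : Fin n) : 0 ≤ r := by
  rcases h 1 i i with hr | hr <;> exact (Nat.cast_nonneg _).trans hr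

lemma ncard_diff_smul_le (h : NoBalancedSplit G A r) (hij : Matches A r g i j) :
    ((A j \ g • A i).ncard : ℝ) ≤ r :=
  (h g i j).resolve_left hij.not_ge

lemma ncard_smul_diff_le (h : NoBalancedSplit G A r) (hij : Matches A r g i j) :
    ((g • A i \ A j).ncard : ℝ) ≤ r := by
  have hinter : (A i ∩ g⁻¹ • A j).ncard = (A j ∩ g • A i).ncard := by
    rw [← Set.ncard_smul_set g, Set.smul_set_inter, smul_inv_smul, Set.inter_comm]
  have hdiff : (A i \ g⁻¹ • A j).ncard = (g • A i \ A j).ncard := by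
    rw [← Set.ncard_smul_set g, Set.smul_set_sdiff, smul_inv_smul]
  rcases h g⁻¹ j i with hle | hle
  · exact absurd (hinter ▸ hle) hij.not_ge
  · rwa [hdiff] at hle

lemma ncard_symmDiff_le (h : NoBalancedSplit G A r) (hij : Matches A r g i j) :
    ((symmDiff (g • A i) (A j)).ncard : ℝ) ≤ 2 * r := by
  have hunion : ((symmDiff (g • A i) (A j)).ncard : ℝ) ≤
      (g • A i \ A j).ncard + (A j \ g • A i).ncard := by
    exact_mod_cast Set.ncard_union_le _ _
  linarith [h.ncard_smul_diff_le hij, h.ncard_diff_smul_le hij]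

lemma ncard_sub_le_ncard_inter [Finite V] (h : NoBalancedSplit G A r) (hij : Matches A r g i j) :
    ((A i).ncard : ℝ) - r ≤ (A j ∩ g • A i).ncard := by
  have hsplit : ((A j ∩ g • A i).ncard : ℝ) + (g • A i \ A j).ncard = (A i).ncard := by
    rw [Set.inter_comm, ← Set.ncard_smul_set g (A i)]
    exact_mod_cast Set.ncard_inter_add_ncard_sdiff_eq_ncard _ _
  linarith [h.ncard_smul_diff_le hij]

lemma ncard_sub_le [Finite V] (h : NoBalancedSplit G A r) (hij : Matches A r g i j) :
    ((A i).ncard : ℝ) - r ≤ (A j).ncard :=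
  (h.ncard_sub_le_ncard_inter hij).trans
    (by exact_mod_cast Set.ncard_le_ncard Set.inter_subset_left)

lemma eq_of_matches [Finite V] (h : NoBalancedSplit G A r) (hA : IsNPartition n A)
    (hij : Matches A r g i j) (hij' : Matches A r g i j') : j = j' := by
  by_contra hne
  have hsub : A j' ∩ g • A i ⊆ g • A i \ A j := fun x hx =>
    ⟨hx.2, fun hxj => Set.disjoint_left.mp (hA.2.1 j j' hne) hxj hx.1⟩
  have hle : ((A j' ∩ g • A i).ncard : ℝ) ≤ (g • A i \ A j).ncard := by
    exact_mod_cast Set.ncard_le_ncard hsub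
  exact hij'.not_ge (hle.trans (h.ncard_smul_diff_le hij))

/-- Each of the two steps `A i → A j → A m` loses at most `r` points, hence the `3r`. -/
lemma matches_mul [Finite V] (h : NoBalancedSplit G A r) (hij : Matches A r g i j)
    (hjm : Matches A r g' j m) (hi : 3 * r < (A i).ncard) : Matches A r (g' * g) i m := by
  have hsub : g' • (A j ∩ g • A i) ⊆ (A m ∩ (g' * g) • A i) ∪ (g' • A j \ A m) := by
    rw [Set.smul_set_inter, mul_smul]
    intro x hx
    by_cases hm : x ∈ A m
    exacts [Or.inl ⟨hm, hx.2⟩, Or.inr ⟨hx.1, hm⟩]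
  have hle : ((A j ∩ g • A i).ncard : ℝ) ≤
      (A m ∩ (g' * g) • A i).ncard + (g' • A j \ A m).ncard := by
    rw [← Set.ncard_smul_set g']
    exact_mod_cast (Set.ncard_le_ncard hsub).trans (Set.ncard_union_le _ _)
  have := h.ncard_sub_le_ncard_inter hij
  have := h.ncard_smul_diff_le hjm
  unfold Matches
  linarith

theorem exists_hom_perm_matches [Finite V] (h : NoBalancedSplit G A r) (hA : IsNPartition n A)
    (i₀ : Fin n)
    (hbig : ∀ k, ((A i₀).ncard : ℝ) - r ≤ (A k).ncard →
      n * r < (A k).ncard ∧ 3 * r < (A k).ncard) :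
    ∃ L : Finset (Fin n), L.Nonempty ∧
      ∃ Φ : G →* Equiv.Perm L, ∀ (g : G) (k : L), Matches A r g k (Φ g k) := by
  classical
  have hr := h.nonneg i₀
  have hbig₀ := (hbig i₀ (by linarith)).2
  set L := Finset.univ.filter fun k => ∃ g : G, Matches A r g i₀ k
  have hbigL : ∀ k : L, n * r < (A k).ncard ∧ 3 * r < (A k).ncard := fun ⟨k, hk⟩ => by
    obtain ⟨g, hg⟩ := (Finset.mem_filter.mp hk).2
    exact hbig k (h.ncard_sub_le hg)
  have hclosed : ∀ (g : G) (k : L) j, Matches A r g k j → j ∈ L := fun g ⟨k, hk⟩ j hkj => by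
    obtain ⟨g₀, hg₀⟩ := (Finset.mem_filter.mp hk).2
    exact Finset.mem_filter.mpr ⟨Finset.mem_univ _, g * g₀, h.matches_mul hg₀ hkj hbig₀⟩
  choose φ hφ using fun (g : G) (k : L) => exists_matches hA g (hbigL k).1
  have huniq : ∀ (g : G) (k : L) j, Matches A r g k j → φ g k = j :=
    fun g k j hj => h.eq_of_matches hA (hφ g k) hj
  let _ : MulAction G L :=
    { smul := fun g k => ⟨φ g k, hclosed g k _ (hφ g k)⟩
      one_smul := fun k => Subtype.ext (huniq 1 k k (matches_one (by linarith [(hbigL k).2])))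
      mul_smul := fun g g' k =>
        Subtype.ext (huniq _ k _ (h.matches_mul (hφ g' k) (hφ g _) (hbigL k).2)) }
  have hi₀ : i₀ ∈ L := Finset.mem_filter.mpr ⟨Finset.mem_univ _, 1, matches_one (by linarith)⟩
  exact ⟨L, ⟨i₀, hi₀⟩, MulAction.toPermHom G L, hφ⟩

end NoBalancedSplit

end Matching

theorem exists_perm_castLE_of_hom {n : ℕ} (L : Finset (Fin n)) (hL : L.Nonempty) {G : Type*}
    [Group G] (Φ : G →* Equiv.Perm L) :
    ∃ (l : ℕ) (_ : 1 ≤ l) (hln : l ≤ n) (τ : Equiv.Perm (Fin n)) (Ψ : G →* Equiv.Perm (Fin l)),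
      ∀ (g : G) (i : Fin l), ∃ k : L,
        τ (Fin.castLE hln i) = k ∧ τ (Fin.castLE hln (Ψ g i)) = Φ g k := by
  classical
  have hln : L.card ≤ n := by simpa using L.card_le_univ
  let e : L ≃ Fin L.card := L.equivFin
  let τ : Equiv.Perm (Fin n) := ((Fin.castLEquiv hln).symm.trans e.symm).extendSubtype
  have hτ : ∀ i, τ (Fin.castLE hln i) = e.symm i := fun i => by
    rw [Equiv.extendSubtype_apply_of_mem _ _ (by simp)]
    simp [Fin.castLEquiv]
  refine ⟨L.card, hL.card_pos, hln, τ, e.permCongrHom.toMonoidHom.comp Φ, fun g i => ?_⟩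
  exact ⟨e.symm i, hτ i, by simp [hτ]⟩

section Gap

variable {Γ : SimpleGraph V} {G : Type*} [Group G] [MulAction G V] {n : ℕ} {A : Fin n → Set V}

lemma IsNPartition.three_mul_div_lt_ncard_of_two [Finite V] (Γ : SimpleGraph V)
    {A : Fin 2 → Set V} (hA : IsNPartition 2 A) {h H : ℝ} (hH : 0 < H) (hgap : 6 * h < H)
    (hbdry : ∀ k, ((edgeBdry Γ (A k)).ncard : ℝ) ≤ h * (A k).ncard) (k : Fin 2) :
    3 * (2 * (⨆ i, ((edgeBdry Γ (A i)).ncard : ℝ)) / H) < (A k).ncard := by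
  have hDk : (⨆ i, ((edgeBdry Γ (A i)).ncard : ℝ)) ≤ h * (A k).ncard := ciSup_le fun i => by
    rw [hA.ncard_edgeBdry_eq_of_two Γ i k]
    exact hbdry k
  rw [← mul_div_assoc, div_lt_iff₀ hH]
  nlinarith [mul_lt_mul_of_pos_right hgap (hA.ncard_pos k)]

lemma noBalancedSplit_of_lt_multiH [Finite V]
    (hact : ∀ (g : G) (u v : V), Γ.Adj (g • u) (g • v) ↔ Γ.Adj u v) (hA : IsNPartition n A)
    (hlt : ∀ k, ((edgeBdry Γ (A k)).ncard : ℝ) / (A k).ncard < multiH Γ (n + 1)) :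
    NoBalancedSplit G A (2 * (⨆ k, ((edgeBdry Γ (A k)).ncard : ℝ)) / multiH Γ (n + 1)) := by
  have hD : ∀ k, ((edgeBdry Γ (A k)).ncard : ℝ) ≤ ⨆ k, ((edgeBdry Γ (A k)).ncard : ℝ) :=
    le_ciSup (f := fun k => ((edgeBdry Γ (A k)).ncard : ℝ)) (Finite.bddAbove_range _)
  intro g i j
  exact ncard_inter_le_or_ncard_diff_le Γ hA hlt hD
    (by rw [ncard_edgeBdry_smul Γ hact]; exact hD i) j

theorem exists_hom_perm_of_gap [Finite V] (hn : 2 ≤ n)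
    (hact : ∀ (g : G) (u v : V), Γ.Adj (g • u) (g • v) ↔ Γ.Adj u v)
    (hgap : multiH Γ (n + 1) > 2 * (n + 1) * multiH Γ n) (hA : IsNPartition n A)
    (hach : edgeRatioMax Γ A = multiH Γ n) :
    ∃ L : Finset (Fin n), L.Nonempty ∧ ∃ Φ : G →* Equiv.Perm L, ∀ (g : G) (k : L),
      ((symmDiff (g • A k) (A (Φ g k))).ncard : ℝ)
        ≤ 4 * multiH Γ n / multiH Γ (n + 1) * (⨆ k, ((A k).ncard : ℝ)) := by
  set h := multiH Γ n
  set H := multiH Γ (n + 1)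
  have hbdry : ∀ k, ((edgeBdry Γ (A k)).ncard : ℝ) ≤ h * (A k).ncard := fun k =>
    (div_le_iff₀ (hA.ncard_pos k)).mp (hach ▸ div_le_edgeRatioMax Γ A k)
  have hh : 0 ≤ h := hach ▸ edgeRatioMax_nonneg Γ A
  have hn' : (2 : ℝ) ≤ n := by exact_mod_cast hn
  have hhH : h < H := by nlinarith
  have : NeZero n := ⟨by omega⟩
  have hH : 0 < H := hh.trans_lt hhH
  obtain ⟨i₀, hi₀⟩ := Finite.exists_max fun k => ((A k).ncard : ℝ)
  have hM : (⨆ k, ((A k).ncard : ℝ)) = (A i₀).ncard :=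
    le_antisymm (ciSup_le hi₀)
      (le_ciSup (f := fun k => ((A k).ncard : ℝ)) (Finite.bddAbove_range _) i₀)
  set D := ⨆ k, ((edgeBdry Γ (A k)).ncard : ℝ)
  have hDM : D ≤ h * (A i₀).ncard :=
    ciSup_le fun k => (hbdry k).trans (mul_le_mul_of_nonneg_left (hi₀ k) hh)
  have hsplit : NoBalancedSplit G A (2 * D / H) := noBalancedSplit_of_lt_multiH hact hA
    fun k => (hach ▸ div_le_edgeRatioMax Γ A k).trans_lt hhH
  have hr := hsplit.nonneg i₀
  have hnr : (n + 1) * (2 * D / H) < (A i₀).ncard := by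
    rw [← mul_div_assoc, div_lt_iff₀ hH]
    nlinarith [hA.ncard_pos i₀]
  have hbig : ∀ k, ((A i₀).ncard : ℝ) - 2 * D / H ≤ (A k).ncard →
      n * (2 * D / H) < (A k).ncard ∧ 3 * (2 * D / H) < (A k).ncard := fun k hk => by
    refine ⟨by linarith, ?_⟩
    -- for `n = 2`, `hk` and `hnr` bound `|A k|` only by twice the threshold
    obtain rfl | hn3 : n = 2 ∨ 3 ≤ n := by omega
    · exact hA.three_mul_div_lt_ncard_of_two Γ hH (by norm_num at hgap; linarith) hbdry k
    · have hn3' : (3 : ℝ) ≤ n := by exact_mod_cast hn3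
      nlinarith
  obtain ⟨L, hL, Φ, hΦ⟩ := hsplit.exists_hom_perm_matches hA i₀ hbig
  refine ⟨L, hL, Φ, fun g k => (hsplit.ncard_symmDiff_le (hΦ g k)).trans ?_⟩
  rw [hM, show 2 * (2 * D / H) = 4 * D / H by ring, div_mul_eq_mul_div, mul_assoc]
  gcongr

end Gap

theorem homomorphism_from_h_gap_general {V : Type*} [Fintype V] (Γ : SimpleGraph V)
    (n : ℕ) (hn : 2 ≤ n)
    (G : Type*) [Group G] [MulAction G V]
    (hact : ∀ (g : G) (u v : V), Γ.Adj (g • u) (g • v) ↔ Γ.Adj u v)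
    (hgap : multiH Γ (n + 1) > 2 * (n + 1) * multiH Γ n)
    (A : Fin n → Set V) (hA : IsNPartition n A)
    (hach : edgeRatioMax Γ A = multiH Γ n) :
    ∃ (l : ℕ) (_ : 1 ≤ l) (hln : l ≤ n) (τ : Equiv.Perm (Fin n))
      (Φ : G →* Equiv.Perm (Fin l)),
      ∀ (g : G) (i : Fin l),
        ((symmDiff (g • A (τ (Fin.castLE hln i))) (A (τ (Fin.castLE hln (Φ g i))))).ncard : ℝ)
          ≤ 4 * multiH Γ n / multiH Γ (n + 1) * (⨆ k, ((A k).ncard : ℝ)) := by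
  obtain ⟨L, hL, Φ, hΦ⟩ := exists_hom_perm_of_gap hn hact hgap hA hach
  obtain ⟨l, hl, hln, τ, Ψ, hΨ⟩ := exists_perm_castLE_of_hom L hL Φ
  refine ⟨l, hl, hln, τ, Ψ, fun g i => ?_⟩
  obtain ⟨k, hk, hgk⟩ := hΨ g i
  rw [hk, hgk]
  exact hΦ g k

theorem homomorphism_from_h_gap {V : Type*} [Fintype V] (Γ : SimpleGraph V)
    (n : ℕ) (hn : 2 ≤ n) (hcard : n + 1 ≤ Fintype.card V)
    (G : Type*) [Group G] [MulAction G V]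
    (hact : ∀ (g : G) (u v : V), Γ.Adj (g • u) (g • v) ↔ Γ.Adj u v)
    (htrans : ∀ u v : V, ∃ g : G, g • u = v)
    (hgap : multiH Γ (n + 1) > 2 * (n + 1) * multiH Γ n)
    (A : Fin n → Set V) (hA : IsNPartition n A)
    (hach : edgeRatioMax Γ A = multiH Γ n) :
    ∃ (l : ℕ) (_ : 1 ≤ l) (hln : l ≤ n) (τ : Equiv.Perm (Fin n))
      (Φ : G →* Equiv.Perm (Fin l)),
      ∀ (g : G) (i : Fin l),
        ((symmDiff (g • A (τ (Fin.castLE hln i))) (A (τ (Fin.castLE hln (Φ g i))))).ncard : ℝ)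
          ≤ 4 * multiH Γ n / multiH Γ (n + 1) * (⨆ k, ((A k).ncard : ℝ)) :=
  homomorphism_from_h_gap_general Γ n hn G hact hgap A hA hach

end Multiway
end

section
/- Let Γ = (V,E) be a finite graph and let f : V → ℝ be a nonzero function. Then there exists a non-empty subset S ⊆ supp(f) such that 4·Ray_Γ(f) ≥ (√(|δS|/|S| + 1) − 1)^2, where Ray_Γ(f) = (Σ_{(u,v)∈E} |f(u) − f(v)|^2) / (Σ_{v∈V} |f(v)|^2) is the (nonnormalized) Rayleigh quotient, the first sum being over the edges of Γ (each edge counted once). -/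
open scoped Pointwise

namespace Multiway

variable {V : Type*}

/-!
Write `F = |f|` and compare `F x` with the maximum and minimum of `F` over the closed
neighbourhood of `x`. A vertex lies in the vertex boundary of the superlevel set `{t < F²}`
exactly when `t` lies between the squared neighbourhood minimum and maximum, so integrating in `t`
gives `∫ |δ{t < F²}| dt = ∑ (max² - min²)` next to `∫ |{t < F²}| dt = ∑ F²`; the superlevel set
of least ratio `ρ = |δS| / |S|` therefore satisfies `ρ ∑ F² ≤ ∑ (max² - min²)`.
Charging `max - F` and `F - min` to edges bounds their squared sums by the Dirichlet energy `E`,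
and Cauchy–Schwarz gives `∑ (max² - min²) ≤ 4 √(∑ F²) √E + E`. With `s² = E / ∑ F²` this reads
`ρ ≤ 4 s + s²`, i.e. `√(ρ + 1) - 1 ≤ 2 s`.
-/

open Finset MeasureTheory

section DirichletEnergy

variable [Fintype V] (G : SimpleGraph V) [DecidableRel G.Adj]

def edgeSqDiff (g : V → ℝ) : Sym2 V → ℝ :=
  Sym2.lift ⟨fun u v => (g u - g v) ^ 2, fun u v => by ring⟩

omit [Fintype V] in
@[simp]
theorem edgeSqDiff_mk (g : V → ℝ) (u v : V) : edgeSqDiff g s(u, v) = (g u - g v) ^ 2 :=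
  rfl

omit [Fintype V] in
theorem edgeSqDiff_nonneg (g : V → ℝ) (e : Sym2 V) : 0 ≤ edgeSqDiff g e := by
  induction e using Sym2.ind with
  | _ u v => exact sq_nonneg _

noncomputable def dirichletEnergy (g : V → ℝ) : ℝ :=
  ∑ e ∈ G.edgeFinset, edgeSqDiff g e

variable {G}

theorem dirichletEnergy_nonneg (g : V → ℝ) : 0 ≤ dirichletEnergy G g :=
  sum_nonneg fun e _ => edgeSqDiff_nonneg g e

theorem dirichletEnergy_neg (g : V → ℝ) : dirichletEnergy G (-g) = dirichletEnergy G g := by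
  refine sum_congr rfl fun e _ => ?_
  induction e using Sym2.ind with
  | _ u v => simp only [edgeSqDiff_mk, Pi.neg_apply]; ring

theorem dirichletEnergy_abs_le (g : V → ℝ) :
    dirichletEnergy G (fun v => |g v|) ≤ dirichletEnergy G g := by
  refine sum_le_sum fun e _ => ?_
  induction e using Sym2.ind with
  | _ u v => exact sq_le_sq.2 (abs_abs_sub_abs_le_abs_sub _ _)

end DirichletEnergy

section NeighborhoodExtrema

variable [Fintype V] [DecidableEq V] (G : SimpleGraph V) [DecidableRel G.Adj]

def closedNbhd (x : V) : Finset V :=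
  insert x (G.neighborFinset x)

theorem mem_closedNbhd {x y : V} : y ∈ closedNbhd G x ↔ y = x ∨ G.Adj x y := by
  simp [closedNbhd]

theorem closedNbhd_nonempty (x : V) : (closedNbhd G x).Nonempty :=
  insert_nonempty _ _

noncomputable def nbhdSup (g : V → ℝ) (x : V) : ℝ :=
  (closedNbhd G x).sup' (closedNbhd_nonempty G x) g

noncomputable def nbhdInf (g : V → ℝ) (x : V) : ℝ :=
  (closedNbhd G x).inf' (closedNbhd_nonempty G x) g

variable {G}

theorem le_nbhdSup {g : V → ℝ} {x y : V} (hy : y ∈ closedNbhd G x) : g y ≤ nbhdSup G g x :=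
  le_sup' g hy

theorem nbhdInf_le {g : V → ℝ} {x y : V} (hy : y ∈ closedNbhd G x) : nbhdInf G g x ≤ g y :=
  inf'_le g hy

theorem self_mem_closedNbhd (x : V) : x ∈ closedNbhd G x :=
  mem_insert_self _ _

theorem nbhdInf_le_nbhdSup (g : V → ℝ) (x : V) : nbhdInf G g x ≤ nbhdSup G g x :=
  (nbhdInf_le (self_mem_closedNbhd x)).trans (le_nbhdSup (self_mem_closedNbhd x))

theorem nbhdInf_eq_neg_nbhdSup_neg (g : V → ℝ) (x : V) :
    nbhdInf G g x = -nbhdSup G (-g) x := by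
  apply le_antisymm
  · rw [le_neg]
    exact sup'_le _ _ fun y hy => neg_le_neg (nbhdInf_le hy)
  · exact le_inf' _ _ fun y hy => neg_le.mpr (le_nbhdSup (G := G) (g := -g) hy)

theorem nbhdSup_sq {F : V → ℝ} (hF : 0 ≤ F) (x : V) :
    nbhdSup G (fun v => F v ^ 2) x = nbhdSup G F x ^ 2 := by
  obtain ⟨z, hz, hzF⟩ := exists_mem_eq_sup' (closedNbhd_nonempty G x) F
  refine le_antisymm (sup'_le _ _ fun y hy => ?_) (le_nbhdSup hz |>.trans_eq' ?_)
  · exact pow_le_pow_left₀ (hF y) (le_nbhdSup hy) 2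
  · rw [nbhdSup, hzF]

theorem nbhdInf_sq {F : V → ℝ} (hF : 0 ≤ F) (x : V) :
    nbhdInf G (fun v => F v ^ 2) x = nbhdInf G F x ^ 2 := by
  obtain ⟨z, hz, hzF⟩ := exists_mem_eq_inf' (closedNbhd_nonempty G x) F
  refine le_antisymm ((nbhdInf_le hz).trans_eq ?_) (le_inf' _ _ fun y hy => ?_)
  · rw [nbhdInf, hzF]
  · exact pow_le_pow_left₀ (le_inf' _ _ fun v _ => hF v) (nbhdInf_le hy) 2

theorem mem_vertBdry_superlevel_iff (g : V → ℝ) (t : ℝ) (x : V) :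
    x ∈ vertBdry G {v | t < g v} ↔ nbhdInf G g x ≤ t ∧ t < nbhdSup G g x := by
  have hx := self_mem_closedNbhd (G := G) x
  constructor
  · rintro ⟨y, hxy, hcross⟩
    have hy : y ∈ closedNbhd G x := (mem_closedNbhd G).2 (Or.inr hxy)
    by_cases htx : t < g x
    · exact ⟨(nbhdInf_le hy).trans (not_lt.1 fun h => hcross (iff_of_true htx h)),
        htx.trans_le (le_nbhdSup hx)⟩
    · exact ⟨(nbhdInf_le hx).trans (not_lt.1 htx),
        (not_not.1 fun h => hcross (iff_of_false htx h)).trans_le (le_nbhdSup hy)⟩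
  · rintro ⟨hinf, hsup⟩
    obtain ⟨z, hz, hzg⟩ := exists_mem_eq_inf' (closedNbhd_nonempty G x) g
    obtain ⟨z', hz', hz'g⟩ := exists_mem_eq_sup' (closedNbhd_nonempty G x) g
    change nbhdInf G g x = g z at hzg
    change nbhdSup G g x = g z' at hz'g
    by_cases htx : t < g x
    · obtain rfl | hxz := (mem_closedNbhd G).1 hz
      · exact absurd htx (not_lt.2 (hzg ▸ hinf))
      · exact ⟨z, hxz, fun h => (h.1 htx).not_ge (hzg ▸ hinf)⟩
    · obtain rfl | hxz := (mem_closedNbhd G).1 hz'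
      · exact absurd (hz'g ▸ hsup) htx
      · exact ⟨z', hxz, fun h => htx (h.2 (show t < g z' from hz'g ▸ hsup))⟩

/-- Each `x` below its neighbourhood maximum is charged to the edge joining it to a vertex where
the maximum is attained; `x` is the lower endpoint of that edge, so no edge is charged twice. -/
theorem sum_sq_nbhdSup_sub_le_dirichletEnergy (g : V → ℝ) :
    ∑ x, (nbhdSup G g x - g x) ^ 2 ≤ dirichletEnergy G g := by
  choose y hy hgy using fun x => exists_mem_eq_sup' (closedNbhd_nonempty G x) g
  change ∀ x, nbhdSup G g x = g (y x) at hgy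
  set P := univ.filter fun x => g x < g (y x)
  have hadj : ∀ x ∈ P, G.Adj (y x) x := by
    intro x hx
    obtain h | h := (mem_closedNbhd G).1 (hy x)
    · exact absurd (h ▸ (mem_filter.1 hx).2) (lt_irrefl _)
    · exact h.symm
  have hinj : Set.InjOn (fun x => s(y x, x)) P := by
    intro x hx x' hx' (h : s(y x, x) = s(y x', x'))
    obtain ⟨-, h⟩ | ⟨hxy, hyx⟩ := Sym2.eq_iff.1 h
    · exact h
    · have hlt := (mem_filter.1 hx).2
      have hlt' := (mem_filter.1 hx').2
      rw [hxy] at hlt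
      rw [← hyx] at hlt'
      exact absurd (hlt.trans hlt') (lt_irrefl _)
  calc ∑ x, (nbhdSup G g x - g x) ^ 2 = ∑ x ∈ P, edgeSqDiff g s(y x, x) := by
        simp only [hgy, edgeSqDiff_mk]
        refine (sum_filter_of_ne fun x _ hne => ?_).symm
        refine lt_of_le_of_ne (hgy x ▸ le_nbhdSup (self_mem_closedNbhd x)) fun h => hne ?_
        rw [h, sub_self, sq, mul_zero]
    _ = ∑ e ∈ P.image fun x => s(y x, x), edgeSqDiff g e := (sum_image hinj).symm
    _ ≤ dirichletEnergy G g := by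
        refine sum_le_sum_of_subset_of_nonneg ?_ fun e _ _ => edgeSqDiff_nonneg g e
        simp only [Finset.image_subset_iff, SimpleGraph.mem_edgeFinset, SimpleGraph.mem_edgeSet]
        exact hadj

theorem sum_sq_sub_nbhdInf_le_dirichletEnergy (g : V → ℝ) :
    ∑ x, (g x - nbhdInf G g x) ^ 2 ≤ dirichletEnergy G g := by
  calc ∑ x, (g x - nbhdInf G g x) ^ 2 = ∑ x, (nbhdSup G (-g) x - (-g) x) ^ 2 := by
        simp only [nbhdInf_eq_neg_nbhdSup_neg, Pi.neg_apply]
        exact sum_congr rfl fun x _ => by ring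
    _ ≤ dirichletEnergy G g :=
        dirichletEnergy_neg (G := G) g ▸ sum_sq_nbhdSup_sub_le_dirichletEnergy (-g)

end NeighborhoodExtrema

section Coarea

theorem integrable_sum_indicator_one {ι : Type*} (s : Finset ι) {I : ι → Set ℝ}
    (hI : ∀ i, MeasurableSet (I i)) (hfin : ∀ i, volume (I i) ≠ ⊤) :
    Integrable fun t => ∑ i ∈ s, (I i).indicator (1 : ℝ → ℝ) t :=
  integrable_finsetSum s fun i _ => (integrableOn_const (hfin i)).integrable_indicator (hI i)

theorem integral_sum_indicator_one {ι : Type*} (s : Finset ι) {I : ι → Set ℝ}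
    (hI : ∀ i, MeasurableSet (I i)) (hfin : ∀ i, volume (I i) ≠ ⊤) :
    ∫ t, ∑ i ∈ s, (I i).indicator (1 : ℝ → ℝ) t = ∑ i ∈ s, volume.real (I i) := by
  rw [integral_finsetSum s fun i _ =>
    (integrableOn_const (hfin i)).integrable_indicator (hI i)]
  exact sum_congr rfl fun i _ => integral_indicator_one (hI i)

theorem ncard_eq_sum_indicator_one [Fintype V] {S : Set V} {I : V → Set ℝ} {t : ℝ}
    (h : ∀ x, x ∈ S ↔ t ∈ I x) : (S.ncard : ℝ) = ∑ x, (I x).indicator (1 : ℝ → ℝ) t := by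
  classical
  simp only [Set.indicator_apply, ← h, Pi.one_apply, sum_boole, Set.filter_mem_univ_eq_toFinset,
    Set.ncard_eq_toFinset_card']

end Coarea

noncomputable def vertIsoRatio (G : SimpleGraph V) (S : Set V) : ℝ :=
  ((vertBdry G S).ncard : ℝ) / S.ncard

theorem vertIsoRatio_nonneg (G : SimpleGraph V) (S : Set V) : 0 ≤ vertIsoRatio G S := by
  unfold vertIsoRatio
  positivity

theorem vertIsoRatio_mul_ncard [Finite V] (G : SimpleGraph V) {S : Set V} (hS : S.Nonempty) :
    vertIsoRatio G S * S.ncard = (vertBdry G S).ncard :=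
  div_mul_cancel₀ _ (Nat.cast_ne_zero.2 ((Set.ncard_pos (Set.toFinite S)).2 hS).ne')

theorem exists_superlevel_eq [Finite V] (g : V → ℝ) {t : ℝ} (h : ∃ x, t < g x) :
    ∃ v, t < g v ∧ {x | t < g x} = {x | g v ≤ g x} := by
  obtain ⟨v, hv, hmin⟩ := Set.exists_min_image {x | t < g x} g (Set.toFinite _) h
  exact ⟨v, hv, Set.ext fun x => ⟨hmin x, fun hx => show t < g x from hv.trans_le hx⟩⟩

section Cheeger

variable [Fintype V] [DecidableEq V] {G : SimpleGraph V} [DecidableRel G.Adj]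

/-- For `0 < t` the two sums count `{t < g}` and its vertex boundary; as sums of interval
indicators they can be integrated in `t`. -/
theorem mul_sum_indicator_Ioo_le_sum_indicator_Ico {g : V → ℝ} {ρ : ℝ}
    (hρ : ∀ v, 0 < g v → ρ ≤ vertIsoRatio G {x | g v ≤ g x}) (t : ℝ) :
    ρ * ∑ x, (Set.Ioo 0 (g x)).indicator (1 : ℝ → ℝ) t ≤
      ∑ x, (Set.Ico (nbhdInf G g x) (nbhdSup G g x)).indicator (1 : ℝ → ℝ) t := by
  by_cases hlevel : 0 < t ∧ ∃ x, t < g x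
  · obtain ⟨ht, hne⟩ := hlevel
    obtain ⟨v, hv, hL⟩ := exists_superlevel_eq g hne
    have hcard : ({x | t < g x}.ncard : ℝ) = ∑ x, (Set.Ioo 0 (g x)).indicator 1 t :=
      ncard_eq_sum_indicator_one fun x => by simp [ht]
    have hbdry : ((vertBdry G {x | t < g x}).ncard : ℝ) =
        ∑ x, (Set.Ico (nbhdInf G g x) (nbhdSup G g x)).indicator 1 t :=
      ncard_eq_sum_indicator_one fun x =>
        (mem_vertBdry_superlevel_iff g t x).trans Set.mem_Ico.symm
    rw [← hcard, ← hbdry, hL, ← vertIsoRatio_mul_ncard G ⟨v, le_refl (g v)⟩]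
    exact mul_le_mul_of_nonneg_right (hρ v (ht.trans hv)) (Nat.cast_nonneg _)
  · have hzero : ∀ x, (Set.Ioo 0 (g x)).indicator (1 : ℝ → ℝ) t = 0 := fun x =>
      Set.indicator_of_notMem (fun hmem => hlevel ⟨hmem.1, x, hmem.2⟩) _
    simp only [hzero, sum_const_zero, mul_zero]
    exact sum_nonneg fun x _ => Set.indicator_nonneg (fun _ _ => zero_le_one) _

theorem exists_vertIsoRatio_superlevel_mul_sum_le {g : V → ℝ} (hg : 0 ≤ g) (hg0 : g ≠ 0) :
    ∃ w, 0 < g w ∧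
      vertIsoRatio G {x | g w ≤ g x} * ∑ x, g x ≤ ∑ x, (nbhdSup G g x - nbhdInf G g x) := by
  obtain ⟨v₀, hv₀⟩ := Function.ne_iff.1 hg0
  have hpos : (univ.filter fun v => 0 < g v).Nonempty :=
    ⟨v₀, mem_filter.2 ⟨mem_univ _, (hg v₀).lt_of_ne' hv₀⟩⟩
  obtain ⟨w, hw, hmin⟩ := exists_min_image _ (fun w => vertIsoRatio G {x | g w ≤ g x}) hpos
  refine ⟨w, (mem_filter.1 hw).2, ?_⟩
  have hpt := mul_sum_indicator_Ioo_le_sum_indicator_Ico (G := G)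
    (fun v hv => hmin v (mem_filter.2 ⟨mem_univ _, hv⟩))
  have hIoo := integral_sum_indicator_one univ (fun x => measurableSet_Ioo (a := 0) (b := g x))
    fun x => measure_Ioo_lt_top.ne
  have hIco := integral_sum_indicator_one univ
    (fun x => measurableSet_Ico (a := nbhdInf G g x) (b := nbhdSup G g x))
    fun x => measure_Ico_lt_top.ne
  have hg' : ∀ x, 0 ≤ g x := hg
  simp only [Real.volume_real_Ioo, Real.volume_real_Ico, sub_zero, max_eq_left, hg', sub_nonneg,
    nbhdInf_le_nbhdSup] at hIoo hIco
  rw [← hIoo, ← hIco, ← integral_const_mul]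
  exact integral_mono ((integrable_sum_indicator_one _ (fun _ => measurableSet_Ioo)
    fun _ => measure_Ioo_lt_top.ne).const_mul _)
    (integrable_sum_indicator_one _ (fun _ => measurableSet_Ico) fun _ => measure_Ico_lt_top.ne) hpt

end Cheeger

section Rayleigh

variable [Fintype V] [DecidableEq V] {G : SimpleGraph V} [DecidableRel G.Adj]

theorem sum_nbhdSup_sq_sub_nbhdInf_sq_le (F : V → ℝ) :
    ∑ x, (nbhdSup G F x ^ 2 - nbhdInf G F x ^ 2) ≤
      4 * (√(∑ x, F x ^ 2) * √(dirichletEnergy G F)) + dirichletEnergy G F := by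
  set p := fun x => nbhdSup G F x - F x
  set q := fun x => F x - nbhdInf G F x
  set E := dirichletEnergy G F
  have hp : ∑ x, p x ^ 2 ≤ E := sum_sq_nbhdSup_sub_le_dirichletEnergy F
  have hq : ∑ x, q x ^ 2 ≤ E := sum_sq_sub_nbhdInf_le_dirichletEnergy F
  have hpq : √(∑ x, (p x + q x) ^ 2) ≤ 2 * √E := by
    refine Real.sqrt_le_iff.2 ⟨by positivity, ?_⟩
    rw [mul_pow, Real.sq_sqrt (dirichletEnergy_nonneg F)]
    calc ∑ x, (p x + q x) ^ 2 ≤ ∑ x, (2 * p x ^ 2 + 2 * q x ^ 2) :=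
          sum_le_sum fun x _ => by linarith [sq_nonneg (p x - q x)]
      _ = 2 * ∑ x, p x ^ 2 + 2 * ∑ x, q x ^ 2 := by rw [sum_add_distrib, mul_sum, mul_sum]
      _ ≤ 2 ^ 2 * E := by linarith
  calc ∑ x, (nbhdSup G F x ^ 2 - nbhdInf G F x ^ 2)
      ≤ ∑ x, (2 * (F x * (p x + q x)) + p x ^ 2) := sum_le_sum fun x _ => by
        have : nbhdSup G F x ^ 2 - nbhdInf G F x ^ 2 =
            2 * (F x * (p x + q x)) + p x ^ 2 - q x ^ 2 := by simp only [p, q]; ring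
        linarith [sq_nonneg (q x)]
    _ = 2 * ∑ x, F x * (p x + q x) + ∑ x, p x ^ 2 := by rw [sum_add_distrib, mul_sum]
    _ ≤ 2 * (√(∑ x, F x ^ 2) * √(∑ x, (p x + q x) ^ 2)) + E := by
        gcongr
        exact Real.sum_mul_le_sqrt_mul_sqrt _ _ _
    _ ≤ 2 * (√(∑ x, F x ^ 2) * (2 * √E)) + E := by gcongr
    _ = 4 * (√(∑ x, F x ^ 2) * √E) + E := by ring

end Rayleigh

theorem sqrt_add_one_sub_one_sq_le {ρ S E : ℝ} (hρ : 0 ≤ ρ) (hS : 0 < S) (hE : 0 ≤ E)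
    (h : ρ * S ≤ 4 * (√S * √E) + E) : (√(ρ + 1) - 1) ^ 2 ≤ 4 * (E / S) := by
  set s := √E / √S
  have hs : 0 ≤ s := by positivity
  have hs2 : s ^ 2 = E / S := by rw [div_pow, Real.sq_sqrt hE, Real.sq_sqrt hS.le]
  have hsS : s * S = √S * √E := by
    have : √S ≠ 0 := Real.sqrt_ne_zero'.2 hS
    calc s * S = √E / √S * (√S * √S) := by rw [Real.mul_self_sqrt hS.le]
      _ = √S * √E := by field_simp
  have hρs : ρ ≤ 4 * s + s ^ 2 := by
    refine le_of_mul_le_mul_right (h.trans_eq ?_) hS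
    rw [add_mul, mul_assoc, hsS, hs2, div_mul_cancel₀ E hS.ne']
  have hupper : √(ρ + 1) ≤ 2 * s + 1 :=
    Real.sqrt_le_iff.2 ⟨by positivity, by nlinarith⟩
  have hlower : 1 ≤ √(ρ + 1) := Real.one_le_sqrt.2 (by linarith)
  calc (√(ρ + 1) - 1) ^ 2 ≤ (2 * s) ^ 2 := pow_le_pow_left₀ (by linarith) (by linarith) 2
    _ = 4 * (E / S) := by rw [mul_pow, hs2]; norm_num

theorem rayleigh_vertex_cheeger {V : Type*} [Fintype V] [DecidableEq V]
    (G : SimpleGraph V) [DecidableRel G.Adj] (f : V → ℝ) (hf : f ≠ 0) :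
    ∃ S : Set V, S.Nonempty ∧ S ⊆ Function.support f ∧
      4 * ((∑ e ∈ G.edgeFinset,
              Sym2.lift ⟨fun u v => |f u - f v| ^ 2, fun a b => by simp only []; rw [abs_sub_comm]⟩ e) /
            (∑ v, |f v| ^ 2))
        ≥ (Real.sqrt (((vertBdry G S).ncard : ℝ) / ((S.ncard : ℝ)) + 1) - 1) ^ 2 := by
  set F : V → ℝ := fun v => |f v|
  have hF : 0 ≤ F := fun v => abs_nonneg (f v)
  have hF2 : (fun v => F v ^ 2) ≠ 0 := fun h =>
    hf (funext fun v => by simpa [F] using congrFun h v)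
  obtain ⟨w, hw, hratio⟩ :=
    exists_vertIsoRatio_superlevel_mul_sum_le (G := G) (fun v => sq_nonneg (F v)) hF2
  have hS : 0 < ∑ v, F v ^ 2 := sum_pos' (fun v _ => sq_nonneg (F v)) ⟨w, mem_univ w, hw⟩
  have hE : ∑ e ∈ G.edgeFinset, Sym2.lift ⟨fun u v => |f u - f v| ^ 2,
      fun a b => by simp only []; rw [abs_sub_comm]⟩ e = dirichletEnergy G f :=
    sum_congr rfl fun e _ => by induction e using Sym2.ind with | _ u v => exact sq_abs _
  refine ⟨{x | F w ^ 2 ≤ F x ^ 2}, ⟨w, le_rfl⟩, fun x hx => ?_, ?_⟩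
  · exact fun h0 => by simpa [F, h0] using hw.trans_le hx
  rw [hE]
  refine sqrt_add_one_sub_one_sq_le (vertIsoRatio_nonneg G _) hS (dirichletEnergy_nonneg f) ?_
  calc vertIsoRatio G {x | F w ^ 2 ≤ F x ^ 2} * ∑ v, F v ^ 2
      ≤ ∑ x, (nbhdSup G (fun v => F v ^ 2) x - nbhdInf G (fun v => F v ^ 2) x) := hratio
    _ = ∑ x, (nbhdSup G F x ^ 2 - nbhdInf G F x ^ 2) := by
        simp only [nbhdSup_sq hF, nbhdInf_sq hF]
    _ ≤ 4 * (√(∑ v, F v ^ 2) * √(dirichletEnergy G F)) + dirichletEnergy G F :=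
        sum_nbhdSup_sq_sub_nbhdInf_sq_le F
    _ ≤ 4 * (√(∑ v, F v ^ 2) * √(dirichletEnergy G f)) + dirichletEnergy G f := by
        gcongr <;> exact dirichletEnergy_abs_le f

end Multiway
end

section
/- Let ε > 0, let H be a finite group acting transitively on a finite set W, and let C ⊆ W be a non-empty subset such that for every h ∈ H, |C △ h·C| ≤ ε·|C|. Then |W ∖ C| ≤ (ε/2)·|W|. In particular, if |C| ≤ |W|/2 then ε ≥ 1. -/
/-! Count the pairs `(h, c)` with `c ∈ C` and `h • c ∉ C`. By transitivity, for fixed `c` exactly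
`|H| / |W|` elements of `H` send `c` to any given point, so `∑ₕ |h • C \ C| = |H| |C| |W \ C| / |W|`.
Since `|h • C| = |C|`, also `|C ∆ h • C| = 2 |h • C \ C|`, and summing the hypothesis over `H` gives
`2 |C| |W \ C| / |W| ≤ ε |C|`. -/

open scoped Pointwise

namespace Multiway

variable {V : Type*}

section Counting

open Finset MulAction

variable {H W : Type*} [Group H] [MulAction H W]

theorem ncard_symmDiff_smul_set [Finite W] (h : H) (C : Set W) :
    (symmDiff C (h • C)).ncard = 2 * (h • C ∩ Cᶜ).ncard := by
  rw [Set.symmDiff_def, Set.ncard_union_eq disjoint_sdiff_sdiff, ← Set.sdiff_eq,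
    (Set.ncard_eq_ncard_iff_ncard_sdiff_eq_ncard_sdiff).1 (Set.ncard_smul_set h C).symm, two_mul]

variable [Fintype H]

section DecidableEq

variable [DecidableEq W]

theorem card_filter_smul_eq_eq_of_isPretransitive [IsPretransitive H W] (a b b' : W) :
    #{h : H | h • a = b} = #{h : H | h • a = b'} := by
  obtain ⟨g, rfl⟩ := exists_smul_eq H b b'
  refine card_nbij' (g * ·) (g⁻¹ * ·) ?_ ?_ ?_ ?_ <;> intro h <;> simp [mul_smul, inv_smul_eq_iff]

theorem card_filter_smul_eq_mul_card [Fintype W] [IsPretransitive H W] (a b : W) :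
    #{h : H | h • a = b} * Fintype.card W = Fintype.card H := by
  rw [← card_univ (α := H), card_eq_sum_card_fiberwise (s := univ) (f := (· • a)) (t := univ)
    (fun _ _ => mem_coe.2 (mem_univ _)), sum_const_nat fun b' _ =>
    card_filter_smul_eq_eq_of_isPretransitive a b' b, card_univ, mul_comm]

theorem card_filter_smul_mem_mul_card [Fintype W] [IsPretransitive H W] (a : W) (T : Finset W) :
    #{h : H | h • a ∈ T} * Fintype.card W = #T * Fintype.card H := by
  have hfiber (b : W) (hb : b ∈ T) :
      #{h ∈ {h : H | h • a ∈ T} | h • a = b} * Fintype.card W = Fintype.card H := by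
    rw [← card_filter_smul_eq_mul_card (H := H) a b, filter_filter]
    congr 2
    ext h
    simp only [mem_filter, mem_univ, true_and]
    exact ⟨And.right, fun hab => ⟨hab ▸ hb, hab⟩⟩
  rw [card_eq_sum_card_fiberwise (s := {h : H | h • a ∈ T}) (f := (· • a)) (t := T)
    (fun h hh => (mem_filter.1 hh).2), sum_mul, sum_const_nat hfiber]

theorem sum_card_filter_smul_mem_mul_card [Fintype W] [IsPretransitive H W] (S T : Finset W) :
    (∑ h : H, #{c ∈ S | h • c ∈ T}) * Fintype.card W = #S * #T * Fintype.card H := by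
  simp_rw [card_filter]
  rw [sum_comm, sum_mul, sum_const_nat fun a _ => ?_, mul_assoc]
  rw [← card_filter, card_filter_smul_mem_mul_card]

end DecidableEq

theorem sum_ncard_smul_set_inter_mul_card [Fintype W] [IsPretransitive H W] (C D : Set W) :
    (∑ h : H, (h • C ∩ D).ncard) * Fintype.card W = C.ncard * D.ncard * Fintype.card H := by
  classical
  have hcount (h : H) : (h • C ∩ D).ncard = #{c ∈ C.toFinset | h • c ∈ D.toFinset} := by
    rw [← Set.ncard_smul_set h⁻¹, Set.smul_set_inter, inv_smul_smul, Set.ncard_eq_toFinset_card']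
    congr 1
    ext c
    simp only [Set.mem_toFinset, mem_filter, Set.mem_inter_iff, Set.mem_inv_smul_set_iff]
  simp_rw [hcount, Set.ncard_eq_toFinset_card']
  exact sum_card_filter_smul_mem_mul_card _ _

end Counting

theorem almost_invariant_subset_general {H W : Type*} [Group H] [Fintype H] [Fintype W]
    [MulAction H W] (htrans : ∀ w w' : W, ∃ h : H, h • w = w')
    (ε : ℝ) (C : Set W) (hC : C.Nonempty)
    (hinv : ∀ h : H, ((symmDiff C (h • C)).ncard : ℝ) ≤ ε * C.ncard) :
    ((Set.univ \ C : Set W).ncard : ℝ) ≤ ε / 2 * Fintype.card W ∧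
      ((C.ncard : ℝ) ≤ Fintype.card W / 2 → 1 ≤ ε) := by
  have : MulAction.IsPretransitive H W := ⟨htrans⟩
  have hcount : (∑ h : H, ((h • C ∩ Cᶜ).ncard : ℝ)) * Fintype.card W
      = C.ncard * Cᶜ.ncard * Fintype.card H := by
    exact_mod_cast sum_ncard_smul_set_inter_mul_card (H := H) C Cᶜ
  have hbound : 2 * ∑ h : H, ((h • C ∩ Cᶜ).ncard : ℝ) ≤ Fintype.card H * (ε * C.ncard) := by
    calc 2 * ∑ h : H, ((h • C ∩ Cᶜ).ncard : ℝ) = ∑ h : H, ((symmDiff C (h • C)).ncard : ℝ) := by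
          simp [Finset.mul_sum, ncard_symmDiff_smul_set]
      _ ≤ ∑ _h : H, ε * C.ncard := Finset.sum_le_sum fun h _ => hinv h
      _ = Fintype.card H * (ε * C.ncard) := by simp
  have hCpos : (0 : ℝ) < C.ncard := by exact_mod_cast (Set.ncard_pos).2 hC
  have hHpos : (0 : ℝ) < Fintype.card H := by exact_mod_cast Fintype.card_pos
  have hcompl : 2 * (Cᶜ.ncard : ℝ) ≤ ε * Fintype.card W := by
    refine le_of_mul_le_mul_left ?_ (mul_pos hCpos hHpos)
    calc C.ncard * Fintype.card H * (2 * (Cᶜ.ncard : ℝ))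
        = 2 * (∑ h : H, ((h • C ∩ Cᶜ).ncard : ℝ)) * Fintype.card W := by
          rw [mul_assoc 2, hcount]; ring
      _ ≤ Fintype.card H * (ε * C.ncard) * Fintype.card W := by gcongr
      _ = C.ncard * Fintype.card H * (ε * Fintype.card W) := by ring
  have hsplit : (C.ncard : ℝ) + Cᶜ.ncard = Fintype.card W := by
    exact_mod_cast (Nat.card_eq_fintype_card (α := W)) ▸ Set.ncard_add_ncard_compl C
  rw [← Set.compl_eq_univ_sdiff]
  refine ⟨by linarith, fun hhalf => ?_⟩
  refine le_of_mul_le_mul_right (a := (Fintype.card W : ℝ)) ?_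
    (by linarith [Nat.cast_nonneg (α := ℝ) Cᶜ.ncard])
  linarith

theorem almost_invariant_subset {H W : Type*} [Group H] [Fintype H] [Fintype W]
    [MulAction H W] (htrans : ∀ w w' : W, ∃ h : H, h • w = w')
    (ε : ℝ) (hε : 0 < ε) (C : Set W) (hC : C.Nonempty)
    (hinv : ∀ h : H, ((symmDiff C (h • C)).ncard : ℝ) ≤ ε * C.ncard) :
    ((Set.univ \ C : Set W).ncard : ℝ) ≤ ε / 2 * Fintype.card W ∧
      ((C.ncard : ℝ) ≤ Fintype.card W / 2 → 1 ≤ ε) :=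
  almost_invariant_subset_general htrans ε C hC hinv

end Multiway
end

section
/- Let Γ = (V,E) be a finite graph and let 2 ≤ n ≤ |V|. Then ι̃_n(Γ) ≤ ι_n(Γ) ≤ n·ι̃_n(Γ), where ι̃_n(Γ) = min max_{1≤i≤n} |δS_i|/|S_i|, the minimum being over all collections of n non-empty pairwise disjoint subsets S_1,…,S_n ⊆ V. -/
open scoped Pointwise

namespace Multiway

variable {V : Type*}

/-- `ι̃_n(Γ)`: minimum of `max_i |δS_i|/|S_i|` over collections of `n` non-empty
pairwise disjoint subsets (not necessarily covering `V`). -/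
noncomputable def tildeIota (G : SimpleGraph V) (n : ℕ) : ℝ :=
  sInf {r | ∃ S : Fin n → Set V, (∀ i, (S i).Nonempty) ∧
    (∀ i j, i ≠ j → Disjoint (S i) (S j)) ∧ r = vertRatioMax G S}

lemma aux_ncard_iUnion_le {ι : Type*} [Fintype ι] [Fintype V] (s : ι → Set V) :
    (⋃ i, s i).ncard ≤ ∑ i, (s i).ncard := by
  classical
  have h : ⋃ i, s i = ↑(Finset.univ.biUnion fun i => (s i).toFinset) := by
    ext x; simp
  rw [h, Set.ncard_coe_finset]
  refine (Finset.card_biUnion_le).trans ?_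
  simp [Set.ncard_eq_toFinset_card']

lemma vertRatioMax_nonneg (G : SimpleGraph V) {n : ℕ} (hn : 0 < n) (A : Fin n → Set V) :
    0 ≤ vertRatioMax G A := by
  have : Nonempty (Fin n) := ⟨⟨0, hn⟩⟩
  have h := le_ciSup (f := fun i => ((vertBdry G (A i)).ncard : ℝ) / ((A i).ncard : ℝ))
    (Set.Finite.bddAbove (Set.finite_range _)) (Classical.arbitrary (Fin n))
  refine le_trans ?_ h
  positivity

theorem tildeIota_le_multiIota_le {V : Type*} [Fintype V] (G : SimpleGraph V)
    (n : ℕ) (hn : 2 ≤ n) (hcard : n ≤ Fintype.card V) :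
    tildeIota G n ≤ multiIota G n ∧ multiIota G n ≤ n * tildeIota G n := by
  classical
  have hn0 : 0 < n := by omega
  have hne : Nonempty (Fin n) := ⟨⟨0, hn0⟩⟩
  set T := {r | ∃ S : Fin n → Set V, (∀ i, (S i).Nonempty) ∧
    (∀ i j, i ≠ j → Disjoint (S i) (S j)) ∧ r = vertRatioMax G S} with hT
  set P := {r | ∃ A : Fin n → Set V, IsNPartition n A ∧ r = vertRatioMax G A} with hP
  have hPT : P ⊆ T := by
    rintro r ⟨A, ⟨h1, h2, _⟩, hr⟩
    exact ⟨A, h1, h2, hr⟩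
  have hTlb : ∀ r ∈ T, (0:ℝ) ≤ r := by
    rintro r ⟨S, _, _, hr⟩
    rw [hr]; exact vertRatioMax_nonneg G hn0 S
  have hTbdd : BddBelow T := ⟨0, hTlb⟩
  -- a partition exists
  obtain ⟨f⟩ : Nonempty (Fin n ↪ V) :=
    Function.Embedding.nonempty_of_card_le (by simpa using hcard)
  set last : Fin n := ⟨n - 1, by omega⟩ with hlast
  set A0 : Fin n → Set V :=
    fun i => {f i} ∪ (if i = last then (Set.range f)ᶜ else ∅) with hA0
  have hA0part : IsNPartition n A0 := by
    refine ⟨fun i => ⟨f i, Or.inl rfl⟩, ?_, ?_⟩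
    · intro i j hij
      rw [Set.disjoint_left]
      intro x hxi hxj
      rcases hxi with hx1 | hx2
      · rcases hxj with hy1 | hy2
        · exact hij (f.injective (hx1.symm.trans hy1 : f i = f j).symm ▸ rfl)
        · by_cases hj : j = last
          · rw [if_pos hj] at hy2
            exact hy2 ⟨i, hx1.symm⟩
          · rw [if_neg hj] at hy2; exact hy2
      · by_cases hi : i = last
        · rw [if_pos hi] at hx2
          rcases hxj with hy1 | hy2
          · exact hx2 ⟨j, hy1.symm⟩
          · by_cases hj : j = last
            · exact hij (hi.trans hj.symm)
            · rw [if_neg hj] at hy2; exact hy2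
        · rw [if_neg hi] at hx2; exact hx2
    · ext x
      simp only [Set.mem_iUnion, Set.mem_univ, iff_true]
      by_cases hx : x ∈ Set.range f
      · obtain ⟨i, rfl⟩ := hx
        exact ⟨i, Or.inl rfl⟩
      · exact ⟨last, Or.inr (by rw [if_pos rfl]; exact hx)⟩
  have hPne : P.Nonempty := ⟨_, A0, hA0part, rfl⟩
  have h1 : tildeIota G n ≤ multiIota G n := csInf_le_csInf hTbdd hPne hPT
  -- the infimum defining tildeIota is attained
  have hTfin : T.Finite := by
    refine (Set.finite_range (fun S : Fin n → Set V => vertRatioMax G S)).subset ?_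
    rintro r ⟨S, _, _, hr⟩
    exact ⟨S, hr.symm⟩
  have hTne : T.Nonempty := hPne.mono hPT
  have hmem : sInf T ∈ T := hTne.csInf_mem hTfin
  have hr0 : (0:ℝ) ≤ sInf T := hTlb _ hmem
  obtain ⟨S, hSne, hSdisj, hSr⟩ := hmem
  set r := sInf T with hrdef
  have hbddS : BddAbove (Set.range fun i =>
      ((vertBdry G (S i)).ncard : ℝ) / ((S i).ncard : ℝ)) :=
    Set.Finite.bddAbove (Set.finite_range _)
  have hSpos : ∀ i, (0:ℝ) < ((S i).ncard : ℝ) := by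
    intro i
    exact_mod_cast (Set.ncard_pos (Set.toFinite _)).mpr (hSne i)
  have hratio : ∀ i, ((vertBdry G (S i)).ncard : ℝ) ≤ r * ((S i).ncard : ℝ) := by
    intro i
    have h : ((vertBdry G (S i)).ncard : ℝ) / ((S i).ncard : ℝ) ≤ r := by
      rw [hSr]; exact le_ciSup hbddS i
    exact (div_le_iff₀ (hSpos i)).mp h
  -- pick the largest S k
  obtain ⟨k, -, hk⟩ := Finset.exists_max_image Finset.univ
    (fun i => (S i).ncard) ⟨⟨0, hn0⟩, Finset.mem_univ _⟩
  set U : Set V := ⋃ j, ⋃ (_ : j ≠ k), S j with hU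
  have hSkU : S k ⊆ Uᶜ := by
    intro x hx hxU
    simp only [hU, Set.mem_iUnion] at hxU
    obtain ⟨j, hjk, hxj⟩ := hxU
    exact (hSdisj k j (Ne.symm hjk)).le_bot ⟨hx, hxj⟩
  set A : Fin n → Set V := fun i => if i = k then Uᶜ else S i with hA
  have hAk : A k = Uᶜ := by simp [hA]
  have hAne : ∀ i, i ≠ k → A i = S i := by intro i hi; simp [hA, hi]
  have hApart : IsNPartition n A := by
    refine ⟨?_, ?_, ?_⟩
    · intro i
      by_cases hi : i = k
      · obtain ⟨x, hx⟩ := hSne k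
        rw [hi, hAk]
        exact ⟨x, hSkU hx⟩
      · obtain ⟨x, hx⟩ := hSne i
        exact ⟨x, (hAne i hi) ▸ hx⟩
    · intro i j hij
      by_cases hi : i = k
      · subst hi
        rw [hAk, hAne j (Ne.symm hij), Set.disjoint_left]
        intro x hxc hxS
        exact hxc (Set.mem_iUnion.2 ⟨j, Set.mem_iUnion.2 ⟨Ne.symm hij, hxS⟩⟩)
      · by_cases hj : j = k
        · subst hj
          rw [hAne i hi, hAk, Set.disjoint_right]
          intro x hxc hxS
          exact hxc (Set.mem_iUnion.2 ⟨i, Set.mem_iUnion.2 ⟨hi, hxS⟩⟩)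
        · rw [hAne i hi, hAne j hj]; exact hSdisj i j hij
    · ext x
      simp only [Set.mem_iUnion, Set.mem_univ, iff_true]
      by_cases hxU : x ∈ U
      · simp only [hU, Set.mem_iUnion] at hxU
        obtain ⟨j, hjk, hxj⟩ := hxU
        exact ⟨j, (hAne j hjk) ▸ hxj⟩
      · exact ⟨k, hAk ▸ hxU⟩
  -- the boundary of the big part is contained in the union of boundaries
  have hsub : vertBdry G Uᶜ ⊆ ⋃ j, vertBdry G (S j) := by
    rintro x ⟨y, hadj, hxy⟩
    simp only [Set.mem_compl_iff, not_iff_not] at hxy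
    by_cases hx : x ∈ U
    · simp only [hU, Set.mem_iUnion] at hx
      obtain ⟨j, hjk, hxj⟩ := hx
      have hyU : y ∉ U := fun hyU => hxy ⟨fun _ => hyU,
        fun _ => Set.mem_iUnion.2 ⟨j, Set.mem_iUnion.2 ⟨hjk, hxj⟩⟩⟩
      have hyj : y ∉ S j := fun h => hyU (Set.mem_iUnion.2 ⟨j, Set.mem_iUnion.2 ⟨hjk, h⟩⟩)
      exact Set.mem_iUnion.2 ⟨j, y, hadj, fun h => hyj (h.mp hxj)⟩
    · have hyU : y ∈ U := by
        by_contra hyU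
        exact hxy ⟨fun h => absurd h hx, fun h => absurd h hyU⟩
      simp only [hU, Set.mem_iUnion] at hyU
      obtain ⟨j, hjk, hyj⟩ := hyU
      have hxj : x ∉ S j := fun h => hx (Set.mem_iUnion.2 ⟨j, Set.mem_iUnion.2 ⟨hjk, h⟩⟩)
      exact Set.mem_iUnion.2 ⟨j, y, hadj, fun h => hxj (h.mpr hyj)⟩
  have hkey : vertRatioMax G A ≤ n * r := by
    apply ciSup_le
    intro i
    by_cases hik : i = k
    · subst hik
      rw [hAk]
      have hcard1 : ((vertBdry G Uᶜ).ncard : ℝ) ≤ n * r * ((S i).ncard : ℝ) := by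
        have h1 : (vertBdry G Uᶜ).ncard ≤ (⋃ j, vertBdry G (S j)).ncard :=
          Set.ncard_le_ncard hsub (Set.toFinite _)
        have h2 := aux_ncard_iUnion_le (fun j => vertBdry G (S j))
        have h3 : ((vertBdry G Uᶜ).ncard : ℝ) ≤ ∑ j, ((vertBdry G (S j)).ncard : ℝ) := by
          exact_mod_cast h1.trans h2
        refine h3.trans ?_
        have h4 : ∀ j, ((vertBdry G (S j)).ncard : ℝ) ≤ r * ((S i).ncard : ℝ) := by
          intro j
          refine (hratio j).trans ?_
          exact mul_le_mul_of_nonneg_left (by exact_mod_cast hk j (Finset.mem_univ j)) hr0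
        calc ∑ j, ((vertBdry G (S j)).ncard : ℝ) ≤ ∑ _j : Fin n, r * ((S i).ncard : ℝ) :=
              Finset.sum_le_sum fun j _ => h4 j
          _ = n * r * ((S i).ncard : ℝ) := by
              rw [Finset.sum_const, Finset.card_univ, Fintype.card_fin, nsmul_eq_mul]; ring
      have hle : ((S i).ncard : ℝ) ≤ ((Uᶜ : Set V).ncard : ℝ) := by
        exact_mod_cast Set.ncard_le_ncard hSkU (Set.toFinite _)
      have hUcpos : (0:ℝ) < ((Uᶜ : Set V).ncard : ℝ) := lt_of_lt_of_le (hSpos i) hle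
      calc ((vertBdry G Uᶜ).ncard : ℝ) / ((Uᶜ : Set V).ncard : ℝ)
          ≤ ((vertBdry G Uᶜ).ncard : ℝ) / ((S i).ncard : ℝ) :=
            div_le_div_of_nonneg_left (by positivity) (hSpos i) hle
        _ ≤ (n * r * ((S i).ncard : ℝ)) / ((S i).ncard : ℝ) := by
            gcongr
        _ = n * r := by
            rw [mul_div_assoc, div_self (hSpos i).ne', mul_one]
    · rw [hAne i hik]
      have h : ((vertBdry G (S i)).ncard : ℝ) / ((S i).ncard : ℝ) ≤ r := by
        rw [hSr]; exact le_ciSup hbddS i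
      refine h.trans ?_
      have : (1:ℝ) ≤ n := by exact_mod_cast hn0
      nlinarith
  have hPbdd : BddBelow P := hTbdd.mono hPT
  have h2 : multiIota G n ≤ vertRatioMax G A := csInf_le hPbdd ⟨A, hApart, rfl⟩
  exact ⟨h1, h2.trans hkey⟩

end Multiway
end

section
/- Let Γ = (V,E) be a finite connected graph, let G be a group acting on Γ by graph automorphisms whose action on V is transitive, let n ≥ 2, and let V = V_1 ⊔ ⋯ ⊔ V_n be a system of imprimitivity of size n for the action G ↷ V. Then for every i ∈ {1,…,n} there exists an injective map f : V_i → V ∖ V_i such that for every v ∈ V_i, the pair (v, f(v)) is an edge of Γ. -/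
open scoped Pointwise

namespace Multiway

variable {V : Type*}

/-!
Write `B` for the block. Since `B` is a block and `G` is transitive, the stabiliser of `B` is
transitive on `B`, so all vertices of `B` have the same number `d` of neighbours outside `B`, and
`d > 0` because `Γ` is connected. A vertex `y ∉ B` is sent into `B` by some `g`, which moves `B` to
a block disjoint from `B`; so `g` maps the neighbours of `y` in `B` to neighbours of `g • y`
outside `B`, and `y` has at most `d` neighbours in `B`. Double counting the edges leaving `B` now
gives Hall's condition, and Hall's theorem yields the required matching of `B` into its complement.
-/

open Function MulAction

theorem exists_injective_of_le_ncard_of_ncard_le {α β : Type*} [Finite β] (r : α → β → Prop)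
    {s : Set α} (hs : s.Finite) {d : ℕ} (hd : 0 < d)
    (hleft : ∀ a ∈ s, d ≤ {b | r a b}.ncard) (hright : ∀ b, {a ∈ s | r a b}.ncard ≤ d) :
    ∃ f : s → β, Injective f ∧ ∀ a : s, r a (f a) := by
  classical
  have := hs.fintype
  have := Fintype.ofFinite β
  refine (Fintype.all_card_le_filter_rel_iff_exists_injective (fun (a : s) b => r a b)).1
    fun A => Nat.le_of_mul_le_mul_right (Finset.card_mul_le_card_mul (fun (a : s) b => r a b)
      (fun a ha => ?_) (fun b _ => ?_)) hd
  · have hA : (Finset.univ.filter fun b => ∃ a ∈ A, r a b).bipartiteAbove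
        (fun (a : s) b => r a b) a = {b | r a b}.toFinset := by
      ext b
      simpa [Finset.bipartiteAbove] using fun h => ⟨a, ⟨a.2, ha⟩, h⟩
    rw [hA, ← Set.ncard_eq_toFinset_card']
    exact hleft a a.2
  · calc (A.bipartiteBelow (fun (a : s) b => r a b) b).card
        = (Subtype.val '' (A.bipartiteBelow (fun (a : s) b => r a b) b : Set s)).ncard := by
          rw [Set.ncard_image_of_injective _ Subtype.val_injective, Set.ncard_coe_finset]
      _ ≤ {a ∈ s | r a b}.ncard := Set.ncard_le_ncard (by
          rintro _ ⟨a, ha, rfl⟩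
          exact ⟨a.2, (Finset.mem_filter.1 ha).2⟩) (hs.subset fun _ h => h.1)
      _ ≤ d := hright b

section Action

variable {V G : Type*} [Group G] [MulAction G V] {Γ : SimpleGraph V}

theorem neighborSet_smul (hact : ∀ (g : G) (u v : V), Γ.Adj (g • u) (g • v) ↔ Γ.Adj u v)
    (g : G) (u : V) : Γ.neighborSet (g • u) = g • Γ.neighborSet u := by
  ext w
  rw [Set.mem_smul_set_iff_inv_smul_mem, SimpleGraph.mem_neighborSet,
    SimpleGraph.mem_neighborSet, ← hact g⁻¹, inv_smul_smul]

theorem ncard_neighborSet_inter_smul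
    (hact : ∀ (g : G) (u v : V), Γ.Adj (g • u) (g • v) ↔ Γ.Adj u v) (g : G) (u : V) (S : Set V) :
    (Γ.neighborSet (g • u) ∩ g • S).ncard = (Γ.neighborSet u ∩ S).ncard := by
  rw [neighborSet_smul hact, ← Set.smul_set_inter, Set.ncard_smul_set]

theorem isBlock_of_pairwise_disjoint {ι : Type*} {B : ι → Set V} (hdisj : Pairwise (Disjoint on B))
    (hsmul : ∀ (g : G) i, ∃ j, g • B i = B j) (i : ι) : IsBlock G (B i) := by
  refine isBlock_iff_disjoint_smul_of_ne.2 fun g hg => ?_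
  obtain ⟨j, hj⟩ := hsmul g i
  rw [hj] at hg ⊢
  exact hdisj fun h => hg (h ▸ rfl)

theorem _root_.SimpleGraph.Connected.exists_adj_mem_notMem (hconn : Γ.Connected) {S : Set V}
    {u v : V} (hu : u ∈ S) (hv : v ∉ S) : ∃ x ∈ S, ∃ y ∉ S, Γ.Adj x y := by
  obtain ⟨p⟩ := hconn u v
  obtain ⟨d, -, hd₁, hd₂⟩ := p.exists_boundary_dart S hu hv
  exact ⟨_, hd₁, _, hd₂, d.adj⟩

variable [IsPretransitive G V] {B : Set V}

theorem ncard_neighborSet_inter_compl_eq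
    (hact : ∀ (g : G) (u v : V), Γ.Adj (g • u) (g • v) ↔ Γ.Adj u v) (hB : IsBlock G B)
    {u v : V} (hu : u ∈ B) (hv : v ∈ B) :
    (Γ.neighborSet v ∩ Bᶜ).ncard = (Γ.neighborSet u ∩ Bᶜ).ncard := by
  obtain ⟨g, rfl⟩ := exists_smul_eq G u v
  calc (Γ.neighborSet (g • u) ∩ Bᶜ).ncard = (Γ.neighborSet (g • u) ∩ g • Bᶜ).ncard := by
        rw [Set.smul_set_compl, hB.smul_eq_of_mem hu hv]
    _ = _ := ncard_neighborSet_inter_smul hact g u Bᶜ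

theorem ncard_neighborSet_inter_le_of_notMem [Finite V]
    (hact : ∀ (g : G) (u v : V), Γ.Adj (g • u) (g • v) ↔ Γ.Adj u v) (hB : IsBlock G B)
    {u y : V} (hu : u ∈ B) (hy : y ∉ B) :
    (Γ.neighborSet y ∩ B).ncard ≤ (Γ.neighborSet u ∩ Bᶜ).ncard := by
  obtain ⟨g, rfl⟩ := exists_smul_eq G y u
  have hgB : Disjoint (g • B) B := hB.disjoint_smul_of_ne fun h => hy <| by
    rwa [← h, Set.smul_mem_smul_set_iff] at hu
  rw [← ncard_neighborSet_inter_smul hact g y B]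
  exact Set.ncard_le_ncard (Set.inter_subset_inter_right _ hgB.subset_compl_right)

theorem exists_injOn_adj_notMem_of_isBlock [Finite V] (hconn : Γ.Connected)
    (hact : ∀ (g : G) (u v : V), Γ.Adj (g • u) (g • v) ↔ Γ.Adj u v) (hB : IsBlock G B) {u w : V}
    (hu : u ∈ B) (hw : w ∉ B) :
    ∃ f : V → V, Set.InjOn f B ∧ ∀ v ∈ B, f v ∉ B ∧ Γ.Adj v (f v) := by
  classical
  obtain ⟨x, hx, y, hy, hxy⟩ := hconn.exists_adj_mem_notMem hu hw
  have hin : ∀ z, {a ∈ B | Γ.Adj a z ∧ z ∉ B}.ncard ≤ (Γ.neighborSet x ∩ Bᶜ).ncard := by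
    intro z
    by_cases hz : z ∈ B
    · simp [hz]
    calc {a ∈ B | Γ.Adj a z ∧ z ∉ B}.ncard ≤ (Γ.neighborSet z ∩ B).ncard :=
          Set.ncard_le_ncard fun a ⟨ha, hadj, _⟩ => ⟨hadj.symm, ha⟩
      _ ≤ _ := ncard_neighborSet_inter_le_of_notMem hact hB hx hz
  obtain ⟨f, hf, hfr⟩ := exists_injective_of_le_ncard_of_ncard_le (fun v w => Γ.Adj v w ∧ w ∉ B)
    B.toFinite ((Set.ncard_pos (s := Γ.neighborSet x ∩ Bᶜ)).2 ⟨y, hxy, hy⟩)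
    (fun v hv => (ncard_neighborSet_inter_compl_eq hact hB hx hv).ge) hin
  refine ⟨fun v => if h : v ∈ B then f ⟨v, h⟩ else v, fun a ha b hb hab => ?_, fun v hv => ?_⟩
  · simp only [dif_pos ha, dif_pos hb] at hab
    exact congrArg Subtype.val (hf hab)
  · simpa only [dif_pos hv] using (hfr ⟨v, hv⟩).symm

end Action

theorem imprimitivity_block_matching {V : Type*} [Fintype V] (Γ : SimpleGraph V)
    (hconn : Γ.Connected)
    (G : Type*) [Group G] [MulAction G V]
    (hact : ∀ (g : G) (u v : V), Γ.Adj (g • u) (g • v) ↔ Γ.Adj u v)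
    (htrans : ∀ u v : V, ∃ g : G, g • u = v)
    (n : ℕ) (hn : 2 ≤ n) (B : Fin n → Set V) (hB : IsNPartition n B)
    (himp : ∀ g : G, ∃ σ : Equiv.Perm (Fin n), ∀ i, g • B i = B (σ i)) :
    ∀ i : Fin n, ∃ f : V → V, Set.InjOn f (B i) ∧
      ∀ v ∈ B i, f v ∉ B i ∧ Γ.Adj v (f v) := by
  intro i
  obtain ⟨hne, hdisj, -⟩ := hB
  have : IsPretransitive G V := ⟨htrans⟩
  have hblock : IsBlock G (B i) := isBlock_of_pairwise_disjoint hdisj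
    (fun g j => (himp g).elim fun σ hσ => ⟨σ j, hσ j⟩) i
  obtain ⟨j, hji⟩ := Fintype.exists_ne_of_one_lt_card (by rw [Fintype.card_fin]; exact hn) i
  obtain ⟨u, hu⟩ := hne i
  obtain ⟨w, hw⟩ := hne j
  exact exists_injOn_adj_notMem_of_isBlock hconn hact hblock hu
    ((hdisj j i hji).notMem_of_mem_left hw)

end Multiway
end
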